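/- Let E be a real normed vector space and E' a real Banach space, and let ε > 0 and 0 ≤ p < 1 be real numbers. Suppose f : E → E' satisfies ‖f(x+y) − f(x) − f(y)‖ ≤ ε(‖x‖^p + ‖y‖^p) for all x, y ∈ E. Then there exists a unique additive mapping T : E → E' (i.e. T(x+y) = T(x) + T(y) for all x, y) such that ‖f(x) − T(x)‖ ≤ (2ε/(2 − 2^p))‖x‖^p for all x ∈ E; moreover T(x) = lim_{n→∞} 2^{−n} f(2^n x) for every x ∈ E. -/
import Mathlib


open Filter

/-- **Rassias' stability theorem** (Theorem 1.1): if `f : E → E'` satisfies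
`‖f(x+y) − f(x) − f(y)‖ ≤ ε(‖x‖^p + ‖y‖^p)` with `ε > 0`, `0 ≤ p < 1`,
then there is a unique additive `T` with `‖f(x) − T(x)‖ ≤ 2ε/(2 − 2^p)·‖x‖^p`,
and `T x = lim 2⁻ⁿ f(2ⁿ x)`. -/
theorem rassias_stability
    {E E' : Type*} [NormedAddCommGroup E] [NormedSpace ℝ E]
    [NormedAddCommGroup E'] [NormedSpace ℝ E'] [CompleteSpace E']
    (ε p : ℝ) (hε : 0 < ε) (hp0 : 0 ≤ p) (hp1 : p < 1)
    (f : E → E')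
    (hf : ∀ x y : E, ‖f (x + y) - f x - f y‖ ≤ ε * (‖x‖ ^ p + ‖y‖ ^ p)) :
    ∃ T : E → E',
      ((∀ x y : E, T (x + y) = T x + T y) ∧
        (∀ x : E, ‖f x - T x‖ ≤ 2 * ε / (2 - 2 ^ p) * ‖x‖ ^ p) ∧
        (∀ x : E, Tendsto (fun n : ℕ => ((2 : ℝ) ^ n)⁻¹ • f (((2 : ℝ) ^ n) • x))
          atTop (nhds (T x)))) ∧
      (∀ T' : E → E',
        ((∀ x y : E, T' (x + y) = T' x + T' y) ∧
          (∀ x : E, ‖f x - T' x‖ ≤ 2 * ε / (2 - 2 ^ p) * ‖x‖ ^ p)) → T' = T) := by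
  set r : ℝ := (2 : ℝ) ^ (p - 1) with hr_def
  have h2 : (0 : ℝ) < 2 := by norm_num
  have hr0 : 0 < r := Real.rpow_pos_of_pos h2 _
  have hr1 : r < 1 := by
    have : (2 : ℝ) ^ (p - 1) < (2 : ℝ) ^ (0 : ℝ) :=
      Real.rpow_lt_rpow_of_exponent_lt (by norm_num) (by linarith)
    simpa using this
  have h2p : (2 : ℝ) ^ p < 2 := by
    have : (2 : ℝ) ^ p < (2 : ℝ) ^ (1 : ℝ) :=
      Real.rpow_lt_rpow_of_exponent_lt (by norm_num) hp1
    simpa using this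
  have hden : (0 : ℝ) < 2 - 2 ^ p := by linarith
  -- key numeric identity
  have hnum : ∀ n : ℕ, ((2 : ℝ) ^ n)⁻¹ * ((2 : ℝ) ^ n) ^ p = r ^ n := by
    intro n
    have h1 : ((2 : ℝ) ^ n : ℝ) = (2 : ℝ) ^ (n : ℝ) := (Real.rpow_natCast 2 n).symm
    rw [h1, ← Real.rpow_neg (le_of_lt h2), ← Real.rpow_natCast ((2:ℝ)^(p-1)) n,
      ← Real.rpow_mul (le_of_lt h2), ← Real.rpow_mul (le_of_lt h2),
      ← Real.rpow_add h2]
    ring_nf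
  have hnorm_smul : ∀ (n : ℕ) (x : E), ‖((2 : ℝ) ^ n) • x‖ ^ p = ((2:ℝ)^n) ^ p * ‖x‖ ^ p := by
    intro n x
    rw [norm_smul]
    have : ‖((2:ℝ)^n)‖ = (2:ℝ)^n := by
      rw [Real.norm_eq_abs, abs_of_pos (pow_pos h2 n)]
    rw [this, Real.mul_rpow (le_of_lt (pow_pos h2 n)) (norm_nonneg x)]
  set g : E → ℕ → E' := fun x n => ((2 : ℝ) ^ n)⁻¹ • f (((2 : ℝ) ^ n) • x) with hg_def
  have hpow_pos : ∀ n : ℕ, (0:ℝ) < (2:ℝ)^n := fun n => pow_pos h2 n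
  -- the basic smul norm computation
  have hsmul_norm : ∀ (n : ℕ) (v : E'), ‖((2:ℝ)^n)⁻¹ • v‖ = ((2:ℝ)^n)⁻¹ * ‖v‖ := by
    intro n v
    rw [norm_smul, Real.norm_eq_abs, abs_of_pos (inv_pos.mpr (hpow_pos n))]
  -- Cauchy estimate
  have hstep : ∀ (x : E) (n : ℕ), dist (g x n) (g x (n + 1)) ≤ (ε * ‖x‖ ^ p) * r ^ n := by
    intro x n
    set z : E := ((2:ℝ)^n) • x with hz
    have hzz : ((2:ℝ)^(n+1)) • x = z + z := by
      rw [hz, ← add_smul]; ring_nf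
    have hbase := hf z z
    rw [dist_eq_norm]
    have e1 : g x n - g x (n+1) = ((2:ℝ)^(n+1))⁻¹ • (f z + f z - f (z + z)) := by
      simp only [hg_def, hzz, hz]
      rw [smul_sub, smul_add, pow_succ]
      have : ((2:ℝ)^n * 2)⁻¹ • f ((2:ℝ)^n • x) + ((2:ℝ)^n * 2)⁻¹ • f ((2:ℝ)^n • x)
          = ((2:ℝ)^n)⁻¹ • f ((2:ℝ)^n • x) := by
        rw [← add_smul]
        congr 1
        rw [mul_inv]
        ring
      rw [this]
    rw [e1, hsmul_norm]
    have h2' : ‖f z + f z - f (z + z)‖ ≤ ε * (‖z‖^p + ‖z‖^p) := by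
      have : ‖f z + f z - f (z+z)‖ = ‖f (z+z) - f z - f z‖ := by
        rw [← norm_neg]; congr 1; abel
      rw [this]; exact hf z z
    calc ((2:ℝ)^(n+1))⁻¹ * ‖f z + f z - f (z + z)‖
        ≤ ((2:ℝ)^(n+1))⁻¹ * (ε * (‖z‖^p + ‖z‖^p)) := by
          exact mul_le_mul_of_nonneg_left h2' (le_of_lt (inv_pos.mpr (hpow_pos (n+1))))
      _ = ε * (((2:ℝ)^n)⁻¹ * ‖z‖^p) := by
          rw [pow_succ, mul_inv]; ring
      _ = (ε * ‖x‖^p) * r^n := by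
          rw [hz, hnorm_smul, ← hnum n]; ring
  have hcauchy : ∀ x : E, CauchySeq (g x) := fun x =>
    cauchySeq_of_le_geometric r (ε * ‖x‖ ^ p) hr1 (hstep x)
  have hlim : ∀ x : E, ∃ a : E', Tendsto (g x) atTop (nhds a) := fun x =>
    cauchySeq_tendsto_of_complete (hcauchy x)
  choose T hT using hlim
  -- T' scaling lemma for additive maps
  have hadd_scale : ∀ (S : E → E'), (∀ x y, S (x + y) = S x + S y) →
      ∀ (n : ℕ) (x : E), S (((2:ℝ)^n) • x) = ((2:ℝ)^n) • S x := by
    intro S hS n x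
    induction n with
    | zero => simp
    | succ n ih =>
      have h1 : ((2:ℝ)^(n+1)) • x = ((2:ℝ)^n) • x + ((2:ℝ)^n) • x := by
        rw [← add_smul]; ring_nf
      have h2' : ((2:ℝ)^(n+1)) • S x = ((2:ℝ)^n) • S x + ((2:ℝ)^n) • S x := by
        rw [← add_smul]; ring_nf
      rw [h1, hS, ih, h2']
  -- additivity of T
  have hTadd : ∀ x y : E, T (x + y) = T x + T y := by
    intro x y
    have h1 : Tendsto (fun n => g x n + g y n) atTop (nhds (T x + T y)) :=
      (hT x).add (hT y)
    have h2' : Tendsto (fun n => g (x + y) n - (g x n + g y n)) atTop (nhds 0) := by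
      have h0 : Tendsto (fun n : ℕ => (ε * (‖x‖^p + ‖y‖^p)) * r ^ n) atTop (nhds 0) := by
        have := tendsto_pow_atTop_nhds_zero_of_lt_one (le_of_lt hr0) hr1
        simpa using this.const_mul (ε * (‖x‖^p + ‖y‖^p))
      refine squeeze_zero_norm ?_ h0
      · intro n
        have e1 : g (x+y) n - (g x n + g y n)
            = ((2:ℝ)^n)⁻¹ • (f (((2:ℝ)^n) • x + ((2:ℝ)^n) • y) - f (((2:ℝ)^n) • x) - f (((2:ℝ)^n) • y)) := by
          simp only [hg_def, smul_add]
          rw [smul_sub, smul_sub]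
          abel
        rw [e1, hsmul_norm]
        calc ((2:ℝ)^n)⁻¹ * ‖f (((2:ℝ)^n) • x + ((2:ℝ)^n) • y) - f (((2:ℝ)^n) • x) - f (((2:ℝ)^n) • y)‖
            ≤ ((2:ℝ)^n)⁻¹ * (ε * (‖((2:ℝ)^n) • x‖^p + ‖((2:ℝ)^n) • y‖^p)) :=
              mul_le_mul_of_nonneg_left (hf _ _) (le_of_lt (inv_pos.mpr (hpow_pos n)))
          _ = (ε * (‖x‖^p + ‖y‖^p)) * r ^ n := by
              rw [hnorm_smul, hnorm_smul, ← hnum n]; ring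
    have h3 : Tendsto (g (x + y)) atTop (nhds (T x + T y)) := by
      have := h2'.add h1
      simpa using this
    exact tendsto_nhds_unique (hT (x + y)) h3
  -- the error bound
  have hKeq : ∀ x : E, (ε * ‖x‖^p) / (1 - r) = 2 * ε / (2 - 2^p) * ‖x‖^p := by
    intro x
    have hr_eq : r = 2^p / 2 := by
      rw [hr_def, Real.rpow_sub h2, Real.rpow_one]
    have h1r : 1 - r = (2 - 2^p) / 2 := by rw [hr_eq]; ring
    rw [h1r]
    field_simp
  have hTbound : ∀ x : E, ‖f x - T x‖ ≤ 2 * ε / (2 - 2 ^ p) * ‖x‖ ^ p := by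
    intro x
    have h0 : g x 0 = f x := by simp [hg_def]
    have := dist_le_of_le_geometric_of_tendsto₀ r (ε * ‖x‖^p) hr1 (hstep x) (hT x)
    rw [h0, dist_eq_norm] at this
    calc ‖f x - T x‖ ≤ (ε * ‖x‖^p) / (1 - r) := this
      _ = 2 * ε / (2 - 2^p) * ‖x‖^p := hKeq x
  refine ⟨T, ⟨hTadd, hTbound, fun x => hT x⟩, ?_⟩
  -- uniqueness
  rintro T' ⟨hT'add, hT'bound⟩
  funext x
  have htend' : Tendsto (g x) atTop (nhds (T' x)) := by
    have h2' : Tendsto (fun n => g x n - T' x) atTop (nhds 0) := by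
      have h0 : Tendsto (fun n : ℕ => (2 * ε / (2 - 2^p) * ‖x‖^p) * r ^ n) atTop (nhds 0) := by
        have := tendsto_pow_atTop_nhds_zero_of_lt_one (le_of_lt hr0) hr1
        simpa using this.const_mul (2 * ε / (2 - 2^p) * ‖x‖^p)
      refine squeeze_zero_norm ?_ h0
      · intro n
        have e1 : g x n - T' x = ((2:ℝ)^n)⁻¹ • (f (((2:ℝ)^n) • x) - T' (((2:ℝ)^n) • x)) := by
          rw [smul_sub, hadd_scale T' hT'add n x, smul_smul,
            inv_mul_cancel₀ (ne_of_gt (hpow_pos n)), one_smul]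
        rw [e1, hsmul_norm]
        calc ((2:ℝ)^n)⁻¹ * ‖f (((2:ℝ)^n) • x) - T' (((2:ℝ)^n) • x)‖
            ≤ ((2:ℝ)^n)⁻¹ * (2 * ε / (2 - 2^p) * ‖((2:ℝ)^n) • x‖^p) :=
              mul_le_mul_of_nonneg_left (hT'bound _) (le_of_lt (inv_pos.mpr (hpow_pos n)))
          _ = (2 * ε / (2 - 2^p) * ‖x‖^p) * r ^ n := by
              rw [hnorm_smul, ← hnum n]; ring
    have := h2'.add_const (T' x)
    simpa using this
  exact tendsto_nhds_unique htend' (hT x)
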